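/- Let q be a prime power, d ≥ 2 an integer, and E ⊆ F_q^d nonempty with #E ≤ q/4. Then there exists t ∈ F_q with t ≠ 0 such that ∑_{m ∈ F_q^d : m₁² + ⋯ + m_d² = t} |Ê(m)|² ≥ (1/2) · q^{−d−1} · #E. (This spherical-average lower bound shows that a set E with #E ≲ q^β for some β < 1 cannot be a generalised Salem set, i.e. cannot satisfy ∑_{|m|²=t} |Ê(m)|² ≲_ε q^ε q^{−3d/2−1}(#E)² for all t ≠ 0.) -/

import Mathlib

open Finset

/-- The Fourier transform of (the indicator of) a set `E ⊆ F_q^d`: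
`Ê(x) = q^{-d} ∑_{y ∈ E} χ(-x·y)`. -/
noncomputable def fourierTransform {F : Type} [Field F] [Fintype F] [DecidableEq F] {d : ℕ}
    (χ : AddChar F ℂ) (E : Finset (Fin d → F)) (x : Fin d → F) : ℂ :=
  ((Fintype.card F : ℂ) ^ d)⁻¹ * ∑ y ∈ E, χ (-(∑ i, x i * y i))

/-- `‖Ê‖_p = ( q^{-d} ∑_{x ≠ 0} |Ê(x)|^p )^{1/p}`. -/
noncomputable def lpNorm {F : Type} [Field F] [Fintype F] [DecidableEq F] {d : ℕ}
    (χ : AddChar F ℂ) (E : Finset (Fin d → F)) (p : ℝ) : ℝ :=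
  (((Fintype.card F : ℝ) ^ d)⁻¹ *
      ∑ x ∈ Finset.univ.filter (fun x : Fin d → F => x ≠ 0),
        ‖fourierTransform χ E x‖ ^ p) ^ (1 / p)

/-! Plancherel gives the total Fourier mass `∑ₘ |Ê(m)|² = q⁻ᵈ #E`. The zero sphere has at most
`2 q^(d-1)` points and `|Ê(m)| ≤ q⁻ᵈ #E` everywhere, so it carries at most
`(2 #E / q) q⁻ᵈ #E ≤ ½ q⁻ᵈ #E`. Hence the `q - 1` nonzero spheres share at least `½ q⁻ᵈ #E`,
and one of them carries at least a `1/q` part of it. -/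

open Matrix

lemma AddChar.map_sum_eq_prod {A M ι : Type*} [AddCommMonoid A] [CommMonoid M]
    (ψ : AddChar A M) (s : Finset ι) (f : ι → A) : ψ (∑ i ∈ s, f i) = ∏ i ∈ s, ψ (f i) := by
  induction s using Finset.cons_induction with
  | empty => simp
  | cons a s ha ih => rw [sum_cons, prod_cons, AddChar.map_add_eq_mul, ih]

theorem AddChar.sum_apply_dotProduct {R R' ι : Type*} [Field R] [Fintype R] [DecidableEq R]
    [CommRing R'] [IsDomain R'] [Fintype ι] [DecidableEq ι] {ψ : AddChar R R'} (hψ : ψ ≠ 1)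
    (a : ι → R) :
    ∑ m : ι → R, ψ (m ⬝ᵥ a) = if a = 0 then (Fintype.card R : R') ^ Fintype.card ι else 0 := by
  calc ∑ m : ι → R, ψ (m ⬝ᵥ a) = ∑ m : ι → R, ∏ i, ψ (m i * a i) := by
        simp only [dotProduct, AddChar.map_sum_eq_prod]
    _ = ∏ i, ∑ x : R, ψ (x * a i) := by rw [Fintype.prod_sum]
    _ = ∏ i, if a i = 0 then (Fintype.card R : R') else 0 := by
        simp only [AddChar.sum_mulShift _ (AddChar.IsPrimitive.of_ne_one hψ), Nat.cast_ite,
          Nat.cast_zero]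
    _ = _ := by
        rw [Fintype.prod_ite_zero, prod_const, card_univ]
        simp only [funext_iff, Pi.zero_apply]

lemma sq_norm_sum_addChar_dotProduct {R ι : Type*} [CommRing R] [Finite R] [Fintype ι]
    (χ : AddChar R ℂ) (E : Finset (ι → R)) (m : ι → R) :
    (‖∑ y ∈ E, χ (-(m ⬝ᵥ y))‖ : ℂ) ^ 2 = ∑ y ∈ E, ∑ y' ∈ E, χ (m ⬝ᵥ (y' - y)) := by
  rw [← Complex.mul_conj', map_sum, sum_mul_sum]
  refine sum_congr rfl fun y _ => sum_congr rfl fun y' _ => ?_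
  rw [← AddChar.map_neg_eq_conj, neg_neg, ← AddChar.map_add_eq_mul, dotProduct_sub,
    neg_add_eq_sub]

section Sphere

variable {R : Type*} [CommRing R] [NoZeroDivisors R] [Fintype R] [DecidableEq R]

lemma card_filter_mul_self_eq_le_two (c : R) : #{x : R | x * x = c} ≤ 2 := by
  rcases ({x | x * x = c} : Finset R).eq_empty_or_nonempty with hempty | ⟨x₀, hx₀⟩
  · simp [hempty]
  · refine (card_le_card (t := {x₀, -x₀}) fun x hx => ?_).trans card_le_two
    rw [mem_filter_univ] at hx hx₀
    simpa using mul_self_eq_mul_self_iff.mp (hx.trans hx₀.symm)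

variable (R) in
def normSqSphere (d : ℕ) (t : R) : Finset (Fin d → R) := {m | m ⬝ᵥ m = t}

lemma card_normSqSphere_succ_le (n : ℕ) (t : R) :
    #(normSqSphere R (n + 1) t) ≤ 2 * Fintype.card R ^ n := by
  have hfiber : ∀ v : Fin n → R, #{m ∈ normSqSphere R (n + 1) t | Fin.tail m = v} ≤ 2 := by
    intro v
    -- the tail of `m` fixes `m 0 * m 0`, and a square has at most two roots
    refine (card_le_card_of_injOn (fun m => m 0) (t := {x | x * x = t - v ⬝ᵥ v}) ?_ ?_).trans
      (card_filter_mul_self_eq_le_two _)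
    · intro m hm
      simp only [normSqSphere, coe_filter, mem_filter_univ, Set.mem_ofPred_eq] at hm ⊢
      rw [← hm.1, ← hm.2, dotProduct, Fin.sum_univ_succ]
      simp [Fin.tail, dotProduct]
    · intro m hm m' hm' h0
      simp only [coe_filter, Set.mem_ofPred_eq] at hm hm'
      rw [← Fin.cons_self_tail m, ← Fin.cons_self_tail m', hm.2, hm'.2]
      exact congrArg (Fin.cons (α := fun _ => R) · v) h0
  calc #(normSqSphere R (n + 1) t) ≤ 2 * #(univ : Finset (Fin n → R)) :=
        card_le_mul_card_image_of_maps_to (f := Fin.tail) (fun _ _ => mem_univ _) 2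
          fun v _ => hfiber v
    _ = 2 * Fintype.card R ^ n := by simp

end Sphere

section Fourier

variable {F : Type} [Field F] [Fintype F] [DecidableEq F] {d : ℕ}

lemma norm_fourierTransform (χ : AddChar F ℂ) (E : Finset (Fin d → F)) (m : Fin d → F) :
    ‖fourierTransform χ E m‖ = ((Fintype.card F : ℝ) ^ d)⁻¹ * ‖∑ y ∈ E, χ (-(m ⬝ᵥ y))‖ := by
  rw [fourierTransform, norm_mul, norm_inv, norm_pow, Complex.norm_natCast]
  rfl

lemma norm_fourierTransform_le (χ : AddChar F ℂ) (E : Finset (Fin d → F)) (m : Fin d → F) :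
    ‖fourierTransform χ E m‖ ≤ ((Fintype.card F : ℝ) ^ d)⁻¹ * #E := by
  rw [norm_fourierTransform]
  gcongr
  refine (norm_sum_le _ _).trans_eq ?_
  simp [AddChar.norm_apply]

theorem sum_sq_norm_fourierTransform {χ : AddChar F ℂ} (hχ : χ ≠ 1) (E : Finset (Fin d → F)) :
    ∑ m, ‖fourierTransform χ E m‖ ^ 2 = ((Fintype.card F : ℝ) ^ d)⁻¹ * #E := by
  have hq : (Fintype.card F : ℂ) ^ d ≠ 0 := by simp
  apply Complex.ofReal_injective
  push_cast [norm_fourierTransform, mul_pow, sq_norm_sum_addChar_dotProduct]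
  rw [← mul_sum, sum_comm]
  simp_rw [sum_comm (s := univ), AddChar.sum_apply_dotProduct hχ, sub_eq_zero, sum_ite_eq',
    Fintype.card_fin]
  rw [sum_ite_of_true fun _ h => h, sum_const, nsmul_eq_mul]
  field_simp

noncomputable def sphericalMass (χ : AddChar F ℂ) (E : Finset (Fin d → F)) (t : F) : ℝ :=
  ∑ m ∈ normSqSphere F d t, ‖fourierTransform χ E m‖ ^ 2

lemma sum_sphericalMass {χ : AddChar F ℂ} (hχ : χ ≠ 1) (E : Finset (Fin d → F)) :
    ∑ t, sphericalMass χ E t = ((Fintype.card F : ℝ) ^ d)⁻¹ * #E := by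
  rw [← sum_sq_norm_fourierTransform hχ E]
  exact sum_fiberwise _ _ _

lemma sphericalMass_le {n : ℕ} (χ : AddChar F ℂ) (E : Finset (Fin (n + 1) → F)) (t : F) :
    sphericalMass χ E t ≤
      2 * #E / Fintype.card F * (((Fintype.card F : ℝ) ^ (n + 1))⁻¹ * #E) := by
  set q : ℝ := (Fintype.card F : ℝ)
  have hq : q ≠ 0 := by simp [q]
  calc sphericalMass χ E t ≤ #(normSqSphere F (n + 1) t) * ((q ^ (n + 1))⁻¹ * #E) ^ 2 := by
        rw [sphericalMass, ← nsmul_eq_mul]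
        refine sum_le_card_nsmul _ _ _ fun m _ => ?_
        gcongr
        exact norm_fourierTransform_le χ E m
    _ ≤ (2 * q ^ n) * ((q ^ (n + 1))⁻¹ * #E) ^ 2 := by
        gcongr
        simpa [q] using (Nat.cast_le (α := ℝ)).mpr (card_normSqSphere_succ_le n t)
    _ = 2 * #E / q * ((q ^ (n + 1))⁻¹ * #E) := by
        field_simp
        ring

lemma half_le_sum_sphericalMass_erase_zero {n : ℕ} {χ : AddChar F ℂ} (hχ : χ ≠ 1)
    (E : Finset (Fin (n + 1) → F)) (hcard : (#E : ℝ) ≤ Fintype.card F / 4) :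
    1 / 2 * ((Fintype.card F : ℝ) ^ (n + 1))⁻¹ * #E ≤
      ∑ t ∈ univ.erase 0, sphericalMass χ E t := by
  have hq : (0 : ℝ) < Fintype.card F := by simp [Fintype.card_pos]
  have hsmall : 2 * #E / (Fintype.card F : ℝ) ≤ 1 / 2 := by
    rw [div_le_iff₀ hq]
    linarith
  have hzero := (sphericalMass_le χ E 0).trans
    (mul_le_mul_of_nonneg_right hsmall (by positivity))
  have htotal := sum_sphericalMass hχ E
  rw [← add_sum_erase _ _ (mem_univ 0)] at htotal
  linarith

end Fourier

theorem spherical_lower_bound_general {F : Type} [Field F] [Fintype F] [DecidableEq F]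
    {d : ℕ} (hd : 2 ≤ d)
    (χ : AddChar F ℂ) (hχ : ∃ a, χ a ≠ 1)
    (E : Finset (Fin d → F))
    (hcard : (E.card : ℝ) ≤ (Fintype.card F : ℝ) / 4) :
    ∃ t : F, t ≠ 0 ∧
      (1 / 2) * ((Fintype.card F : ℝ) ^ (d + 1))⁻¹ * (E.card : ℝ) ≤
        ∑ m ∈ Finset.univ.filter (fun m : Fin d → F => ∑ i, m i * m i = t),
          ‖fourierTransform χ E m‖ ^ 2 := by
  obtain ⟨n, rfl⟩ : ∃ n, d = n + 1 := ⟨d - 1, by omega⟩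
  set q : ℝ := (Fintype.card F : ℝ)
  have hq : q ≠ 0 := by simp [q]
  have hsum : ∑ _t ∈ univ.erase (0 : F), 1 / 2 * (q ^ (n + 1 + 1))⁻¹ * #E ≤
      ∑ t ∈ univ.erase 0, sphericalMass χ E t :=
    calc ∑ _t ∈ univ.erase (0 : F), 1 / 2 * (q ^ (n + 1 + 1))⁻¹ * #E
        = (q - 1) * (1 / 2 * (q ^ (n + 1 + 1))⁻¹ * #E) := by
          rw [sum_const, card_erase_of_mem (mem_univ _), card_univ, nsmul_eq_mul,
            Nat.cast_pred Fintype.card_pos]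
      _ ≤ q * (1 / 2 * (q ^ (n + 1 + 1))⁻¹ * #E) := by gcongr; linarith
      _ = 1 / 2 * (q ^ (n + 1))⁻¹ * #E := by field_simp; ring
      _ ≤ _ := half_le_sum_sphericalMass_erase_zero (AddChar.ne_one_iff.mpr hχ) E hcard
  obtain ⟨t, ht, hle⟩ := exists_le_of_sum_le ⟨1, by simp⟩ hsum
  exact ⟨t, ne_of_mem_erase ht, hle⟩

/-- Spherical-average lower bound: if `E ⊆ F_q^d` (`d ≥ 2`) is nonempty with
`#E ≤ q/4`, then some sphere `{|m|² = t}`, `t ≠ 0`, carries at least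
`(1/2) q^{-d-1} #E` of the squared Fourier mass of `E`. -/
theorem spherical_lower_bound {F : Type} [Field F] [Fintype F] [DecidableEq F]
    {d : ℕ} (hd : 2 ≤ d)
    (χ : AddChar F ℂ) (hχ : ∃ a, χ a ≠ 1)
    (E : Finset (Fin d → F)) (hE : E.Nonempty)
    (hcard : (E.card : ℝ) ≤ (Fintype.card F : ℝ) / 4) :
    ∃ t : F, t ≠ 0 ∧
      (1 / 2) * ((Fintype.card F : ℝ) ^ (d + 1))⁻¹ * (E.card : ℝ) ≤
        ∑ m ∈ Finset.univ.filter (fun m : Fin d → F => ∑ i, m i * m i = t),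
          ‖fourierTransform χ E m‖ ^ 2 :=
  spherical_lower_bound_general hd χ hχ E hcard
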